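/- Assume k is finite-dimensional and perfect, and let S₁,…,S_m ∈ cent₊(k) be such that κ_{S₁},…,κ_{S_m} form a basis of the space of invariant symmetric bilinear forms on k. If ω is a k-invariant 2-cocycle of the current algebra A ⊗ k with values in an 𝔽-vector space M, then there exist Hochschild maps F₁,…,F_m : A × A → M such that ω(a⊗x, b⊗y) = Σⱼ Fⱼ(a,b)·κ(Sⱼ x, y) for all a, b ∈ A and x, y ∈ k. -/

import Mathlib

open scoped TensorProduct

/-!
For fixed `a b : A` the form `ω_{a,b}(x, y) = ω(a ⊗ x, b ⊗ y)` on `k` is invariant, hence symmetric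
because `k` is perfect, so every scalar form `φ ∘ ω_{a,b}` (`φ ∈ M*`) lies in the span of the
`κ_{Sⱼ}`. Since the `κ_{Sⱼ}` are independent, there are `tⱼ ∈ k ⊗ k` on which they evaluate to the
Kronecker delta; the coefficient of `κ_{Sⱼ}` in `ω_{a,b}` is then `Fⱼ(a, b) = ω_{a,b}(tⱼ)`, which is
bilinear in `(a, b)`. Skew-symmetry and the Hochschild identity of `Fⱼ` are the identities
`ω_{a,b} = -ω_{b,a}` and `ω_{ab,c} = ω_{a,bc} + ω_{b,ac}`, which hold on brackets `⁅u, w⁆ ∈ k` by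
the cocycle condition for `a ⊗ u, b ⊗ w`, and hence everywhere by perfectness.
-/

section PerfectLieAlgebra

variable {R L N : Type*} [CommRing R] [LieRing L] [LieAlgebra R L] [AddCommGroup N] [Module R N]

theorem LinearMap.ext_of_perfect
    (hperf : ∀ z : L, z ∈ Submodule.span R {w : L | ∃ x y : L, ⁅x, y⁆ = w})
    {f g : L →ₗ[R] N} (h : ∀ x y : L, f ⁅x, y⁆ = g ⁅x, y⁆) : f = g :=
  LinearMap.ext_on (Submodule.eq_top_iff'.mpr hperf) fun _ ⟨x, y, hxy⟩ => hxy ▸ h x y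

theorem LinearMap.apply_comm_of_perfect_of_invariant
    (hperf : ∀ z : L, z ∈ Submodule.span R {w : L | ∃ x y : L, ⁅x, y⁆ = w})
    {β : L →ₗ[R] L →ₗ[R] N} (hβ : ∀ x y z : L, β ⁅x, y⁆ z = β x ⁅y, z⁆) (x y : L) :
    β x y = β y x := by
  suffices β x = β.flip x from LinearMap.congr_fun this y
  refine LinearMap.ext_of_perfect hperf fun u w => ?_
  calc β x ⁅u, w⁆
      = β ⁅x, u⁆ w := (hβ x u w).symm
    _ = -β u ⁅x, w⁆ := by rw [← lie_skew, map_neg, LinearMap.neg_apply, hβ]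
    _ = β ⁅u, w⁆ x := by rw [hβ, ← lie_skew x w, map_neg, neg_neg]

end PerfectLieAlgebra

section DualCoordinates

open TensorProduct

variable {ι F : Type*} [Field F]

theorem LinearIndependent.exists_apply_eq_pi_single [Finite ι] [DecidableEq ι] {W : Type*}
    [AddCommGroup W] [Module F W] {v : ι → Module.Dual F W} (hv : LinearIndependent F v) :
    ∃ t : ι → W, ∀ i j, v i (t j) = (Pi.single j 1 : ι → F) i := by
  have hspan := span_flip_eq_top_iff_linearIndependent.mpr
    (hv.map' (LinearMap.ltoFun F W F F) (LinearMap.ker_eq_bot.mpr DFunLike.coe_injective))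
  have hsurj : Function.Surjective (LinearMap.pi v) := by
    rw [← LinearMap.range_eq_top, eq_top_iff, ← hspan, Submodule.span_le]
    rintro _ ⟨w, rfl⟩
    exact ⟨w, rfl⟩
  choose t ht using fun j => hsurj (Pi.single j 1)
  exact ⟨t, fun i j => congrFun (ht j) i⟩

variable {P Q N : Type*} [AddCommGroup P] [Module F P] [AddCommGroup Q] [Module F Q]
  [AddCommGroup N] [Module F N]

theorem LinearIndependent.exists_lift_apply_eq_pi_single [Finite ι] [DecidableEq ι]
    {v : ι → P →ₗ[F] Q →ₗ[F] F} (hv : LinearIndependent F v) :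
    ∃ t : ι → P ⊗[F] Q, ∀ i j, lift (v i) (t j) = (Pi.single j 1 : ι → F) i := by
  have hlift : LinearIndependent F fun i => (lift (v i) : Module.Dual F (P ⊗[F] Q)) := by
    refine LinearIndependent.of_comp (lift.equiv (.id F) P Q F).symm.toLinearMap ?_
    convert hv with i
    ext
    simp
  exact hlift.exists_apply_eq_pi_single

theorem TensorProduct.lift_sum_smul [Fintype ι] (c : ι → F) (v : ι → P →ₗ[F] Q →ₗ[F] N) :
    lift (∑ i, c i • v i) = ∑ i, c i • lift (v i) := by
  ext
  simp

theorem LinearMap.eq_sum_smul_lift_of_compr₂_mem_span [Fintype ι] [DecidableEq ι]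
    {v : ι → P →ₗ[F] Q →ₗ[F] F} {t : ι → P ⊗[F] Q}
    (ht : ∀ i j, lift (v i) (t j) = (Pi.single j 1 : ι → F) i) {β : P →ₗ[F] Q →ₗ[F] N}
    (hβ : ∀ φ : Module.Dual F N, β.compr₂ φ ∈ Submodule.span F (Set.range v)) (x : P) (y : Q) :
    β x y = ∑ j, v j x y • lift β (t j) := by
  rw [← sub_eq_zero, ← Module.forall_dual_apply_eq_zero_iff F]
  intro φ
  obtain ⟨c, hc⟩ := (Submodule.mem_span_range_iff_exists_fun F).mp (hβ φ)
  have hcoord : ∀ j, φ (lift β (t j)) = c j := by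
    intro j
    rw [← LinearMap.comp_apply, ← lift_compr₂, ← hc]
    simp [lift_sum_smul, ht, Pi.single_apply]
  have hφβ : φ (β x y) = ∑ j, c j * v j x y := by
    rw [← LinearMap.compr₂_apply, ← hc]
    simp
  simp [hcoord, hφβ, mul_comm]

end DualCoordinates

section CurrentAlgebra

open TensorProduct

variable {R A L N : Type*} [CommRing R] [CommRing A] [Algebra R A] [LieRing L] [LieAlgebra R L]
  [AddCommGroup N] [Module R N]

/-- The forms `ω_{a,b}` of the paper, as a bilinear function of `(a, b)`. -/
def currentComponent (ω : A ⊗[R] L →ₗ[R] A ⊗[R] L →ₗ[R] N) :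
    A →ₗ[R] A →ₗ[R] L →ₗ[R] L →ₗ[R] N :=
  LinearMap.mk₂ R (fun a b => ω.compl₁₂ (mk R A L a) (mk R A L b))
    (fun _ _ _ => by ext; simp) (fun _ _ _ => by ext; simp)
    (fun _ _ _ => by ext; simp) (fun _ _ _ => by ext; simp)

@[simp]
theorem currentComponent_apply (ω : A ⊗[R] L →ₗ[R] A ⊗[R] L →ₗ[R] N) (a b : A) (x y : L) :
    currentComponent ω a b x y = ω (a ⊗ₜ x) (b ⊗ₜ y) :=
  rfl

variable (hperf : ∀ z : L, z ∈ Submodule.span R {w : L | ∃ x y : L, ⁅x, y⁆ = w})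
  {ω : A ⊗[R] L →ₗ[R] A ⊗[R] L →ₗ[R] N}
  (hinv : ∀ (a b : A) (x y z : L), ω (a ⊗ₜ ⁅x, y⁆) (b ⊗ₜ z) = ω (a ⊗ₜ x) (b ⊗ₜ ⁅y, z⁆))
include hperf hinv

theorem currentComponent_apply_comm (a b : A) (x y : L) :
    ω (a ⊗ₜ x) (b ⊗ₜ y) = ω (a ⊗ₜ y) (b ⊗ₜ x) :=
  LinearMap.apply_comm_of_perfect_of_invariant (β := currentComponent ω a b) hperf (hinv a b) x y

theorem currentComponent_swap (hskew : ∀ X Y : A ⊗[R] L, ω X Y = -ω Y X) (a b : A) :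
    currentComponent ω a b = -currentComponent ω b a := by
  ext x y
  simp [hskew (a ⊗ₜ x), currentComponent_apply_comm hperf hinv b a y x]

theorem currentComponent_mul
    (hcoc : ∀ X Y Z : A ⊗[R] L, ω ⁅X, Y⁆ Z = ω X ⁅Y, Z⁆ - ω Y ⁅X, Z⁆) (a b c : A) :
    currentComponent ω (a * b) c = currentComponent ω a (b * c) + currentComponent ω b (a * c) := by
  ext x y
  refine LinearMap.congr_fun (LinearMap.ext_of_perfect hperf
    (f := (currentComponent ω (a * b) c).flip y)
    (g := (currentComponent ω a (b * c) + currentComponent ω b (a * c)).flip y) fun u w => ?_) x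
  have h := hcoc (a ⊗ₜ u) (b ⊗ₜ w) (c ⊗ₜ y)
  rw [LieAlgebra.ExtendScalars.bracket_tmul, LieAlgebra.ExtendScalars.bracket_tmul,
    LieAlgebra.ExtendScalars.bracket_tmul, ← hinv a, ← hinv b, ← lie_skew w u, tmul_neg, map_neg,
    LinearMap.neg_apply, sub_neg_eq_add] at h
  simpa using h

end CurrentAlgebra

theorem k_invariant_eq_sum_xi_general
    {𝔽 : Type*} [Field 𝔽]
    {k : Type*} [LieRing k] [LieAlgebra 𝔽 k]
    {A : Type*} [CommRing A] [Algebra 𝔽 A]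
    {M : Type*} [AddCommGroup M] [Module 𝔽 M]
    (hperf : ∀ z : k, z ∈ Submodule.span 𝔽 {w : k | ∃ x y : k, ⁅x, y⁆ = w})
    (κ : k →ₗ[𝔽] k →ₗ[𝔽] 𝔽)
    (m : ℕ) (S : Fin m → (k →ₗ[𝔽] k))
    (hindep : LinearIndependent 𝔽 (fun j => κ ∘ₗ S j))
    (hspan : ∀ β : k →ₗ[𝔽] k →ₗ[𝔽] 𝔽,
      (∀ x y : k, β x y = β y x) →
      (∀ x y z : k, β ⁅x, y⁆ z = β x ⁅y, z⁆) →
      β ∈ Submodule.span 𝔽 (Set.range fun j => κ ∘ₗ S j))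
    (ω : (A ⊗[𝔽] k) →ₗ[𝔽] (A ⊗[𝔽] k) →ₗ[𝔽] M)
    (hωskew : ∀ X Y : A ⊗[𝔽] k, ω X Y = - ω Y X)
    (hωcoc : ∀ X Y Z : A ⊗[𝔽] k, ω ⁅X, Y⁆ Z = ω X ⁅Y, Z⁆ - ω Y ⁅X, Z⁆)
    (hinvariant : ∀ (a b : A) (x y z : k),
      ω (a ⊗ₜ ⁅x, y⁆) (b ⊗ₜ z) = ω (a ⊗ₜ x) (b ⊗ₜ ⁅y, z⁆)) :
    ∃ F : Fin m → (A →ₗ[𝔽] A →ₗ[𝔽] M),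
      (∀ j, ∀ a b : A, F j a b = - F j b a) ∧
      (∀ j, ∀ a b c : A, F j (a * b) c = F j a (b * c) + F j b (a * c)) ∧
      (∀ (a b : A) (x y : k),
        ω (a ⊗ₜ x) (b ⊗ₜ y) = ∑ j, κ (S j x) y • F j a b) := by
  obtain ⟨t, ht⟩ := hindep.exists_lift_apply_eq_pi_single
  let F : Fin m → A →ₗ[𝔽] A →ₗ[𝔽] M := fun j => (currentComponent ω).compr₂
    (LinearMap.applyₗ (t j) ∘ₗ TensorProduct.uncurry (.id 𝔽) k k M)
  refine ⟨F, fun j a b => ?_, fun j a b c => ?_, fun a b x y => ?_⟩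
  · simp [F, currentComponent_swap hperf hinvariant hωskew a b]
  · simp [F, currentComponent_mul hperf hinvariant hωcoc a b c]
  · exact (currentComponent ω a b).eq_sum_smul_lift_of_compr₂_mem_span ht (fun φ => hspan _
      (fun x y => congrArg φ (currentComponent_apply_comm hperf hinvariant a b x y))
      (fun x y z => congrArg φ (hinvariant a b x y z))) x y

/-- Let `k` be a finite-dimensional perfect Lie algebra over a field
`𝔽` of characteristic zero with a nondegenerate invariant symmetric bilinear form `κ`,
and let `S₁, …, S_m ∈ cent₊(k)` be such that the forms `κ_{Sⱼ} = κ(Sⱼ·,·)` form a basis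
of the space of invariant symmetric bilinear forms on `k`.  If `ω` is a `k`-invariant
2-cocycle of the current algebra `A ⊗ k` with values in an `𝔽`-vector space `M`, then
there exist Hochschild maps `F₁, …, F_m : A × A → M` such that
`ω(a⊗x, b⊗y) = Σⱼ Fⱼ(a,b)·κ(Sⱼ x, y)` for all `a, b ∈ A`, `x, y ∈ k`. -/
theorem k_invariant_eq_sum_xi
    {𝔽 : Type*} [Field 𝔽] [CharZero 𝔽]
    {k : Type*} [LieRing k] [LieAlgebra 𝔽 k] [FiniteDimensional 𝔽 k]
    {A : Type*} [CommRing A] [Algebra 𝔽 A]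
    {M : Type*} [AddCommGroup M] [Module 𝔽 M]
    (hperf : ∀ z : k, z ∈ Submodule.span 𝔽 {w : k | ∃ x y : k, ⁅x, y⁆ = w})
    (κ : k →ₗ[𝔽] k →ₗ[𝔽] 𝔽)
    (hκsymm : ∀ x y : k, κ x y = κ y x)
    (hκinv : ∀ x y z : k, κ ⁅x, y⁆ z = κ x ⁅y, z⁆)
    (hκnd : ∀ x : k, (∀ y : k, κ x y = 0) → x = 0)
    (m : ℕ) (S : Fin m → (k →ₗ[𝔽] k))
    (hScent : ∀ j, ∀ x y : k, S j ⁅x, y⁆ = ⁅S j x, y⁆)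
    (hSsym : ∀ j, ∀ x y : k, κ (S j x) y = κ x (S j y))
    (hindep : LinearIndependent 𝔽 (fun j => κ ∘ₗ S j))
    (hspan : ∀ β : k →ₗ[𝔽] k →ₗ[𝔽] 𝔽,
      (∀ x y : k, β x y = β y x) →
      (∀ x y z : k, β ⁅x, y⁆ z = β x ⁅y, z⁆) →
      β ∈ Submodule.span 𝔽 (Set.range fun j => κ ∘ₗ S j))
    (ω : (A ⊗[𝔽] k) →ₗ[𝔽] (A ⊗[𝔽] k) →ₗ[𝔽] M)
    (hωskew : ∀ X Y : A ⊗[𝔽] k, ω X Y = - ω Y X)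
    (hωcoc : ∀ X Y Z : A ⊗[𝔽] k, ω ⁅X, Y⁆ Z = ω X ⁅Y, Z⁆ - ω Y ⁅X, Z⁆)
    (hinvariant : ∀ (a b : A) (x y z : k),
      ω (a ⊗ₜ ⁅x, y⁆) (b ⊗ₜ z) = ω (a ⊗ₜ x) (b ⊗ₜ ⁅y, z⁆)) :
    ∃ F : Fin m → (A →ₗ[𝔽] A →ₗ[𝔽] M),
      (∀ j, ∀ a b : A, F j a b = - F j b a) ∧
      (∀ j, ∀ a b c : A, F j (a * b) c = F j a (b * c) + F j b (a * c)) ∧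
      (∀ (a b : A) (x y : k),
        ω (a ⊗ₜ x) (b ⊗ₜ y) = ∑ j, κ (S j x) y • F j a b) :=
  k_invariant_eq_sum_xi_general hperf κ m S hindep hspan ω hωskew hωcoc hinvariant
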